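/- In the state machine of the negotiation protocol, from any state in {GET, TRYGET, GRANTGET}, any path of transitions that reaches NORMAL must pass through EXECUTE, assuming the transition relation given by the protocol (in particular, the only transitions into NORMAL are from EXECUTE via exit and from GRANT via grant-release, while grant-release takes GRANTGET to TRYGET). -/
import Mathlib


inductive PStatus | NORMAL | GET | TRYGET | GRANT | GRANTGET | EXECUTE
deriving DecidableEq

open PStatus in
/-- The transition relation of the negotiation protocol state machine. -/
inductive PStep : PStatus → PStatus → Prop
  | n_get : PStep NORMAL GET
  | n_tryget : PStep NORMAL TRYGET
  | t_get : PStep TRYGET GET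
  | t_t : PStep TRYGET TRYGET
  | g_exec : PStep GET EXECUTE
  | g_tryget : PStep GET TRYGET
  | g_gg : PStep GET GRANTGET
  | t_gg : PStep TRYGET GRANTGET
  | n_grant : PStep NORMAL GRANT
  | gr_gg : PStep GRANT GRANTGET
  | gr_n : PStep GRANT NORMAL
  | gg_t : PStep GRANTGET TRYGET
  | gg_get : PStep GRANTGET GET
  | e_n : PStep EXECUTE NORMAL

open PStatus in
/-- Any transition path from a requesting state in {GET, TRYGET, GRANTGET}
that reaches NORMAL must pass through EXECUTE. -/
theorem path_to_NORMAL_passes_EXECUTE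
    (n : ℕ) (f : ℕ → PStatus)
    (hstep : ∀ k < n, PStep (f k) (f (k + 1)))
    (hstart : f 0 = GET ∨ f 0 = TRYGET ∨ f 0 = GRANTGET)
    (hend : f n = NORMAL) :
    ∃ k ≤ n, f k = EXECUTE := by
  by_contra h
  push_neg at h
  have inv : ∀ k ≤ n, f k = GET ∨ f k = TRYGET ∨ f k = GRANTGET := by
    intro k hk
    induction k with
    | zero => exact hstart
    | succ m ih =>
      have hm : m ≤ n := Nat.le_of_succ_le hk
      have hs := hstep m (Nat.lt_of_succ_le hk)
      have hne := h (m + 1) hk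
      generalize hy : f (m + 1) = y at hs hne ⊢
      rcases ih hm with h1 | h1 | h1 <;> rw [h1] at hs <;> cases hs <;> simp_all
  have := inv n le_rfl
  rw [hend] at this
  simp at this
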